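/- arXiv:2312.12089 — 5 statements merged into one kernel-verified Lean document; each statement's English description precedes it below -/
import Mathlib

section
/- If a metric space X is not doubling, then X is 4-cliquey: for every N ∈ ℕ there exist N distinct points x_1, ..., x_N in X such that the maximum pairwise distance is at most 4 times the minimum pairwise distance. -/
open Metric

/-- A metric space is doubling if there is `M` such that every open ball can be
covered by at most `M` open balls of half its radius. -/
def IsDoubling (X : Type*) [MetricSpace X] : Prop :=
  ∃ M : ℕ, ∀ (x : X) (R : ℝ), 0 < R → ∃ s : Finset X,
    s.card ≤ M ∧ ball x R ⊆ ⋃ y ∈ s, ball y (R / 2)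

/-- `N` distinct points form an `(N,K)`-clique if the maximum pairwise distance is
at most `K` times the minimum pairwise distance. -/
def IsNKClique {X : Type*} [MetricSpace X] (N : ℕ) (K : ℝ) (x : Fin N → X) : Prop :=
  Function.Injective x ∧ ∀ i j k l : Fin N, i ≠ j → k ≠ l →
    dist (x i) (x j) ≤ K * dist (x k) (x l)

/-- `X` is `K`-cliquey if it contains an `(N,K)`-clique for every `N`. -/
def IsCliquey (X : Type*) [MetricSpace X] (K : ℝ) : Prop :=
  ∀ N : ℕ, ∃ x : Fin N → X, IsNKClique N K x

/-- A non-doubling metric space is `4`-cliquey. -/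
theorem not_doubling_implies_four_cliquey (X : Type*) [MetricSpace X]
    (h : ¬ IsDoubling X) : IsCliquey X 4 := by
  classical
  intro N
  simp only [IsDoubling, not_exists, not_forall] at h
  obtain ⟨x, R, hR, hcov⟩ := h N
  push_neg at hcov
  -- hcov : ∀ s : Finset X, s.card ≤ N → ¬ ball x R ⊆ ⋃ y ∈ s, ball y (R/2)
  have key : ∀ k, k ≤ N → ∃ s : Finset X, s.card = k ∧ (↑s ⊆ ball x R) ∧
      ∀ a ∈ s, ∀ b ∈ s, a ≠ b → R / 2 ≤ dist a b := by
    intro k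
    induction k with
    | zero => exact fun _ => ⟨∅, by simp⟩
    | succ k ih =>
      intro hk
      obtain ⟨s, hcard, hsub, hsep⟩ := ih (Nat.le_of_succ_le hk)
      have hns := hcov s (by omega)
      obtain ⟨z, hz, hz2⟩ := Set.not_subset.mp hns
      simp only [Set.mem_iUnion, mem_ball, not_exists, not_lt, exists_prop] at hz2
      push_neg at hz2
      have hzs : z ∉ s := by
        intro hzs
        have := hz2 z hzs
        simp only [dist_self] at this
        linarith
      refine ⟨insert z s, ?_, ?_, ?_⟩
      · rw [Finset.card_insert_of_notMem hzs, hcard]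
      · intro a ha
        rcases Finset.mem_insert.mp ha with rfl | ha
        · exact hz
        · exact hsub ha
      · intro a ha b hb hab
        rcases Finset.mem_insert.mp ha with ha' | ha' <;>
          rcases Finset.mem_insert.mp hb with hb' | hb'
        · exact absurd (ha'.trans hb'.symm) hab
        · subst ha'; exact hz2 b hb'
        · subst hb'; rw [dist_comm]; exact hz2 a ha'
        · exact hsep a ha' b hb' hab
  obtain ⟨s, hcard, hsub, hsep⟩ := key N le_rfl
  set e := s.equivFinOfCardEq hcard
  refine ⟨fun i => (e.symm i : X), ?_, ?_⟩
  · intro i j hij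
    exact e.symm.injective (Subtype.ext hij)
  · intro i j k l hij hkl
    have hij' : ((e.symm i : X)) ≠ (e.symm j : X) := by
      intro hc
      exact hij (e.symm.injective (Subtype.ext hc))
    have hkl' : ((e.symm k : X)) ≠ (e.symm l : X) := by
      intro hc
      exact hkl (e.symm.injective (Subtype.ext hc))
    have h1 : dist ((e.symm i : X)) (e.symm j : X) ≤ 2 * R := by
      have hi := hsub (e.symm i).2
      have hj := hsub (e.symm j).2
      rw [mem_ball] at hi hj
      calc dist ((e.symm i : X)) (e.symm j : X)
          ≤ dist ((e.symm i : X)) x + dist x (e.symm j : X) := dist_triangle _ _ _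
        _ ≤ 2 * R := by rw [dist_comm x] at *; linarith
    have h2 : R / 2 ≤ dist ((e.symm k : X)) (e.symm l : X) :=
      hsep _ (e.symm k).2 _ (e.symm l).2 hkl'
    linarith
end

section
/- If a metric space X contains an (R(N),K)-clique, where R(N) is the Nth diagonal Ramsey number, then X contains an (N, √K)-clique. Consequently, if X is K-cliquey for some K > 1, then X is K^{1/2}-cliquey. -/
open Metric

/-- `R` has the Ramsey property for `N`: any `2`-colouring of the edges of the
complete graph on `R` vertices admits a monochromatic clique on `N` vertices. -/
def RamseyProp (R N : ℕ) : Prop :=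
  ∀ χ : Fin R → Fin R → Bool, ∃ s : Finset (Fin R), s.card = N ∧
    ∃ c : Bool, ∀ i ∈ s, ∀ j ∈ s, i < j → χ i j = c

/-- Asymmetric two-colour Ramsey property. -/
def RP (R M N : ℕ) : Prop :=
  ∀ χ : Fin R → Fin R → Bool, ∃ s : Finset (Fin R),
    (s.card = M ∧ ∀ i ∈ s, ∀ j ∈ s, i < j → χ i j = true) ∨
    (s.card = N ∧ ∀ i ∈ s, ∀ j ∈ s, i < j → χ i j = false)

lemma rp_exists : ∀ M N : ℕ, ∃ R, RP R M N := by
  intro M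
  induction M with
  | zero => exact fun N => ⟨0, fun χ => ⟨∅, Or.inl ⟨rfl, by simp⟩⟩⟩
  | succ M ihM =>
    intro N
    induction N with
    | zero => exact ⟨0, fun χ => ⟨∅, Or.inr ⟨rfl, by simp⟩⟩⟩
    | succ N ihN =>
      obtain ⟨R₁, h₁⟩ := ihM (N + 1)
      obtain ⟨R₂, h₂⟩ := ihN
      refine ⟨R₁ + R₂ + 1, fun χ => ?_⟩
      set v : Fin (R₁ + R₂ + 1) := Fin.last _ with hv
      set A : Finset (Fin (R₁ + R₂ + 1)) :=
        Finset.univ.filter (fun i => i < v ∧ χ i v = true) with hA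
      set B : Finset (Fin (R₁ + R₂ + 1)) :=
        Finset.univ.filter (fun i => i < v ∧ χ i v = false) with hB
      have hcards : R₁ ≤ A.card ∨ R₂ ≤ B.card := by
        by_contra hcon
        push_neg at hcon
        have hdisj : Disjoint A B := by
          rw [Finset.disjoint_left]
          intro a ha hb
          rw [hA, Finset.mem_filter] at ha
          rw [hB, Finset.mem_filter] at hb
          simp_all
        have hunion : A ∪ B = Finset.univ.erase v := by
          ext a
          rw [Finset.mem_union, hA, hB, Finset.mem_filter, Finset.mem_filter,
            Finset.mem_erase]
          constructor
          · rintro (⟨_, h, _⟩ | ⟨_, h, _⟩) <;> exact ⟨h.ne, Finset.mem_univ _⟩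
          · rintro ⟨h, -⟩
            have hlt : a < v := lt_of_le_of_ne (Fin.le_last a) h
            cases hc : χ a v
            · exact Or.inr ⟨Finset.mem_univ _, hlt, rfl⟩
            · exact Or.inl ⟨Finset.mem_univ _, hlt, rfl⟩
        have hAB : A.card + B.card = R₁ + R₂ := by
          rw [← Finset.card_union_of_disjoint hdisj, hunion,
            Finset.card_erase_of_mem (Finset.mem_univ _)]
          simp
        omega
      rcases hcards with hc1 | hc2
      · obtain ⟨t, htA, htc⟩ := Finset.exists_subset_card_eq hc1
        set e := t.orderEmbOfFin htc with he
        have hmemA : ∀ i, e i ∈ A := fun i => htA (t.orderEmbOfFin_mem htc i)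
        have hlt : ∀ i, e i < v ∧ χ (e i) v = true := by
          intro i
          have := hmemA i
          rw [hA, Finset.mem_filter] at this
          exact this.2
        obtain ⟨s', hs'⟩ := h₁ (fun i j => χ (e i) (e j))
        rcases hs' with ⟨hcard', hmono⟩ | ⟨hcard', hmono⟩
        · refine ⟨insert v (s'.map e.toEmbedding), Or.inl ⟨?_, ?_⟩⟩
          · rw [Finset.card_insert_of_notMem, Finset.card_map, hcard']
            intro hmem
            obtain ⟨a, _, hae⟩ := Finset.mem_map.1 hmem
            exact absurd ((hae : e a = v) ▸ (hlt a).1) (lt_irrefl v)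
          · intro i hi j hj hij
            rcases Finset.mem_insert.1 hj with rfl | hj'
            · rcases Finset.mem_insert.1 hi with rfl | hi'
              · exact absurd hij (lt_irrefl _)
              · obtain ⟨a, _, rfl⟩ := Finset.mem_map.1 hi'
                exact (hlt a).2
            · rcases Finset.mem_insert.1 hi with rfl | hi'
              · obtain ⟨a, _, rfl⟩ := Finset.mem_map.1 hj'
                exact absurd ((hlt a).1.trans hij) (lt_irrefl _)
              · obtain ⟨a, ha, rfl⟩ := Finset.mem_map.1 hi'
                obtain ⟨b, hb, rfl⟩ := Finset.mem_map.1 hj'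
                exact hmono a ha b hb (e.lt_iff_lt.1 hij)
        · refine ⟨s'.map e.toEmbedding, Or.inr ⟨by simp [hcard'], ?_⟩⟩
          intro i hi j hj hij
          obtain ⟨a, ha, rfl⟩ := Finset.mem_map.1 hi
          obtain ⟨b, hb, rfl⟩ := Finset.mem_map.1 hj
          exact hmono a ha b hb (e.lt_iff_lt.1 hij)
      · obtain ⟨t, htB, htc⟩ := Finset.exists_subset_card_eq hc2
        set e := t.orderEmbOfFin htc with he
        have hmemB : ∀ i, e i ∈ B := fun i => htB (t.orderEmbOfFin_mem htc i)
        have hlt : ∀ i, e i < v ∧ χ (e i) v = false := by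
          intro i
          have := hmemB i
          rw [hB, Finset.mem_filter] at this
          exact this.2
        obtain ⟨s', hs'⟩ := h₂ (fun i j => χ (e i) (e j))
        rcases hs' with ⟨hcard', hmono⟩ | ⟨hcard', hmono⟩
        · refine ⟨s'.map e.toEmbedding, Or.inl ⟨by simp [hcard'], ?_⟩⟩
          intro i hi j hj hij
          obtain ⟨a, ha, rfl⟩ := Finset.mem_map.1 hi
          obtain ⟨b, hb, rfl⟩ := Finset.mem_map.1 hj
          exact hmono a ha b hb (e.lt_iff_lt.1 hij)
        · refine ⟨insert v (s'.map e.toEmbedding), Or.inr ⟨?_, ?_⟩⟩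
          · rw [Finset.card_insert_of_notMem, Finset.card_map, hcard']
            intro hmem
            obtain ⟨a, _, hae⟩ := Finset.mem_map.1 hmem
            exact absurd ((hae : e a = v) ▸ (hlt a).1) (lt_irrefl v)
          · intro i hi j hj hij
            rcases Finset.mem_insert.1 hj with rfl | hj'
            · rcases Finset.mem_insert.1 hi with rfl | hi'
              · exact absurd hij (lt_irrefl _)
              · obtain ⟨a, _, rfl⟩ := Finset.mem_map.1 hi'
                exact (hlt a).2
            · rcases Finset.mem_insert.1 hi with rfl | hi'
              · obtain ⟨a, _, rfl⟩ := Finset.mem_map.1 hj'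
                exact absurd ((hlt a).1.trans hij) (lt_irrefl _)
              · obtain ⟨a, ha, rfl⟩ := Finset.mem_map.1 hi'
                obtain ⟨b, hb, rfl⟩ := Finset.mem_map.1 hj'
                exact hmono a ha b hb (e.lt_iff_lt.1 hij)

lemma ramsey_exists (N : ℕ) : ∃ R, RamseyProp R N := by
  obtain ⟨R, h⟩ := rp_exists N N
  refine ⟨R, fun χ => ?_⟩
  rcases h χ with ⟨s, ⟨hc, hm⟩ | ⟨hc, hm⟩⟩
  · exact ⟨s, hc, true, hm⟩
  · exact ⟨s, hc, false, hm⟩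

lemma main_step {X : Type*} [MetricSpace X] (K : ℝ) (hK : 1 < K) (N R : ℕ)
    (hR : RamseyProp R N) (hx : ∃ x : Fin R → X, IsNKClique R K x) :
    ∃ y : Fin N → X, IsNKClique N (Real.sqrt K) y := by
  obtain ⟨x, hxinj, hxK⟩ := hx
  have hsqK : (0 : ℝ) < Real.sqrt K := Real.sqrt_pos.2 (by linarith)
  match N with
  | 0 => exact ⟨fun i => i.elim0, fun a => a.elim0, fun i => i.elim0⟩
  | 1 =>
    obtain ⟨s, hs, -⟩ := hR (fun _ _ => true)
    obtain ⟨a, -⟩ := Finset.card_pos.1 (hs ▸ Nat.one_pos)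
    refine ⟨fun _ => x a, fun i j _ => Subsingleton.elim i j, ?_⟩
    intro i j _ _ hij _
    exact absurd (Subsingleton.elim i j) hij
  | (n + 2) =>
    -- there are at least two points, since a set of size n+2 fits inside Fin R
    have hR2 : 2 ≤ R := by
      obtain ⟨s, hs, -⟩ := hR (fun _ _ => true)
      have := s.card_le_univ
      simp only [hs, Finset.card_univ, Fintype.card_fin] at this
      omega
    have h01 : (⟨0, by omega⟩ : Fin R) ≠ ⟨1, by omega⟩ := by
      intro h
      simpa using congrArg Fin.val h
    set S : Finset ℝ :=
      Finset.univ.offDiag.image (fun p : Fin R × Fin R => dist (x p.1) (x p.2)) with hS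
    have hSne : S.Nonempty := by
      refine ⟨dist (x ⟨0, by omega⟩) (x ⟨1, by omega⟩), ?_⟩
      rw [hS, Finset.mem_image]
      exact ⟨(⟨0, by omega⟩, ⟨1, by omega⟩), Finset.mem_offDiag.2
        ⟨Finset.mem_univ _, Finset.mem_univ _, h01⟩, rfl⟩
    set m := S.min' hSne with hm
    have hmle : ∀ i j : Fin R, i ≠ j → m ≤ dist (x i) (x j) := by
      intro i j hij
      have hmem : dist (x i) (x j) ∈ S := by
        rw [hS, Finset.mem_image]
        exact ⟨(i, j), Finset.mem_offDiag.2
          ⟨Finset.mem_univ _, Finset.mem_univ _, hij⟩, rfl⟩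
      exact S.min'_le _ hmem
    obtain ⟨p, hp, hpm⟩ : ∃ p ∈ Finset.univ.offDiag,
        dist (x (Prod.fst p)) (x (Prod.snd p)) = m := by
      obtain ⟨p, hp, hpe⟩ := Finset.mem_image.1 (S.min'_mem hSne)
      exact ⟨p, hp, hpe⟩
    have hpne : p.1 ≠ p.2 := (Finset.mem_offDiag.1 hp).2.2
    have hm0 : 0 < m := hpm ▸ dist_pos.2 (fun h => hpne (hxinj h))
    have hub : ∀ i j : Fin R, i ≠ j → dist (x i) (x j) ≤ K * m := by
      intro i j hij
      have := hxK i j p.1 p.2 hij hpne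
      rwa [hpm] at this
    set χ : Fin R → Fin R → Bool :=
      fun i j => decide (dist (x i) (x j) ≤ Real.sqrt K * m) with hχ
    obtain ⟨s, hcard, c, hc⟩ := hR χ
    have hc' : ∀ i ∈ s, ∀ j ∈ s, i ≠ j → χ i j = c := by
      intro i hi j hj hij
      rcases lt_or_gt_of_ne hij with h | h
      · exact hc i hi j hj h
      · have h2 := hc j hj i hi h
        rw [show χ i j = χ j i by simp [hχ, dist_comm]]
        exact h2
    set e := s.orderIsoOfFin hcard with hee
    refine ⟨fun i => x (e i : Fin R), ?_, ?_⟩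
    · intro a b h
      exact e.injective (Subtype.ext (hxinj h))
    · intro i j k l hij hkl
      have hij' : (e i : Fin R) ≠ (e j : Fin R) :=
        fun h => hij (e.injective (Subtype.ext h))
      have hkl' : (e k : Fin R) ≠ (e l : Fin R) :=
        fun h => hkl (e.injective (Subtype.ext h))
      have h1 := hc' _ (e i).2 _ (e j).2 hij'
      have h2 := hc' _ (e k).2 _ (e l).2 hkl'
      cases c with
      | true =>
        have h1' : dist (x (e i : Fin R)) (x (e j : Fin R)) ≤ Real.sqrt K * m :=
          of_decide_eq_true h1
        have h2' : m ≤ dist (x (e k : Fin R)) (x (e l : Fin R)) := hmle _ _ hkl'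
        calc dist (x (e i : Fin R)) (x (e j : Fin R)) ≤ Real.sqrt K * m := h1'
          _ ≤ Real.sqrt K * dist (x (e k : Fin R)) (x (e l : Fin R)) :=
            mul_le_mul_of_nonneg_left h2' hsqK.le
      | false =>
        have h2' : ¬ (dist (x (e k : Fin R)) (x (e l : Fin R)) ≤ Real.sqrt K * m) :=
          of_decide_eq_false h2
        push_neg at h2'
        have hKm : dist (x (e i : Fin R)) (x (e j : Fin R)) ≤ K * m := hub _ _ hij'
        have hKsq : Real.sqrt K * Real.sqrt K = K :=
          Real.mul_self_sqrt (by linarith)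
        calc dist (x (e i : Fin R)) (x (e j : Fin R)) ≤ K * m := hKm
          _ = Real.sqrt K * (Real.sqrt K * m) := by rw [← mul_assoc, hKsq]
          _ ≤ Real.sqrt K * dist (x (e k : Fin R)) (x (e l : Fin R)) :=
            mul_le_mul_of_nonneg_left h2'.le hsqK.le

/-- If `X` contains an `(R(N),K)`-clique, where `R(N)` is the `N`th diagonal Ramsey
number, then `X` contains an `(N,√K)`-clique; consequently a `K`-cliquey space
(`K > 1`) is `√K`-cliquey. -/
theorem clique_ramsey_sqrt (X : Type*) [MetricSpace X] :
    (∀ K : ℝ, 1 < K → ∀ N R : ℕ, RamseyProp R N →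
      (∃ x : Fin R → X, IsNKClique R K x) →
      ∃ y : Fin N → X, IsNKClique N (Real.sqrt K) y) ∧
    (∀ K : ℝ, 1 < K → IsCliquey X K → IsCliquey X (Real.sqrt K)) := by
  constructor
  · exact fun K hK N R hR hx => main_step K hK N R hR hx
  · intro K hK hC N
    obtain ⟨R, hR⟩ := ramsey_exists N
    exact main_step K hK N R hR (hC R)
end

section
/- If a metric space X is K-cliquey for some K > 1, then X is K'-cliquey for every K' > 1. -/
/-- Each new point keeps only the largest colour class of its edges to the remaining points,
so a set of size `(card κ + 1) ^ L` survives `L` steps. -/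
theorem exists_injective_seq_color_eq_of_lt {α κ : Type*} [Fintype κ] (c : α → α → κ) (L : ℕ)
    (S : Finset α) (hS : (Fintype.card κ + 1) ^ L ≤ S.card) :
    ∃ (a : Fin L → α) (col : Fin L → κ), Function.Injective a ∧ (∀ i, a i ∈ S) ∧
      ∀ i j, i < j → c (a i) (a j) = col i := by
  classical
  induction L generalizing S with
  | zero => exact ⟨Fin.elim0, Fin.elim0, fun i => i.elim0, fun i => i.elim0, fun i => i.elim0⟩
  | succ L ih =>
    set k := Fintype.card κ
    obtain ⟨x, hx⟩ : S.Nonempty := Finset.card_pos.mp (lt_of_lt_of_le (by positivity) hS)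
    have : Nonempty κ := ⟨c x x⟩
    have hrest : k * (k + 1) ^ L ≤ (S.erase x).card := by
      rw [Finset.card_erase_of_mem hx]
      have hpow : (k + 1) ^ (L + 1) = k * (k + 1) ^ L + (k + 1) ^ L := by ring
      have hone : 1 ≤ (k + 1) ^ L := Nat.one_le_pow _ _ (by omega)
      omega
    obtain ⟨col₀, -, hfiber⟩ := Finset.exists_le_card_fiber_of_mul_le_card_of_maps_to
      (f := c x) (t := Finset.univ) (fun _ _ => Finset.mem_univ _) Finset.univ_nonempty
      (by simpa using hrest)
    obtain ⟨a, col, ha, haS, hcol⟩ := ih _ hfiber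
    have haS' : ∀ i, a i ∈ S.erase x ∧ c x (a i) = col₀ := fun i => Finset.mem_filter.mp (haS i)
    refine ⟨Fin.cons x a, Fin.cons col₀ col, ?_, ?_, ?_⟩
    · exact Fin.cons_injective_iff.mpr
        ⟨fun ⟨i, hi⟩ => Finset.ne_of_mem_erase (haS' i).1 hi, ha⟩
    · exact Fin.cases hx fun i => Finset.mem_of_mem_erase (haS' i).1
    · intro i j hij
      obtain ⟨j, rfl⟩ := Fin.exists_succ_eq.mpr (Fin.pos_iff_ne_zero.mp (i.zero_le.trans_lt hij))
      induction i using Fin.cases with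
      | zero => simpa using (haS' j).2
      | succ i => simpa using hcol i j (Fin.succ_lt_succ_iff.mp hij)

theorem exists_injective_monochromatic_of_symmetric (κ : Type*) [Fintype κ] (N : ℕ) :
    ∃ M : ℕ, ∀ c : Fin M → Fin M → κ, (∀ i j, c i j = c j i) →
      ∃ f : Fin N → Fin M, Function.Injective f ∧ ∃ s, ∀ i j, i ≠ j → c (f i) (f j) = s := by
  classical
  set k := Fintype.card κ with hk
  refine ⟨(k + 1) ^ (k * N), fun c hc => ?_⟩
  have hM : 0 < (k + 1) ^ (k * N) := by positivity
  have : Nonempty κ := ⟨c ⟨0, hM⟩ ⟨0, hM⟩⟩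
  obtain ⟨a, col, ha, -, hcol⟩ :=
    exists_injective_seq_color_eq_of_lt c (k * N) Finset.univ (by simp [hk])
  obtain ⟨s, hs⟩ := Fintype.exists_le_card_fiber_of_mul_le_card col (n := N) (by simp [hk])
  obtain ⟨G, hGs, hG⟩ := Finset.exists_subset_card_eq hs
  set g := G.orderEmbOfFin hG
  have hlt : ∀ i j, i < j → c (a (g i)) (a (g j)) = s := fun i j hij =>
    (hcol _ _ (g.strictMono hij)).trans (Finset.mem_filter.mp (hGs (G.orderEmbOfFin_mem hG i))).2
  refine ⟨a ∘ g, ha.comp g.injective, s, fun i j hij => ?_⟩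
  rcases hij.lt_or_gt with h | h
  · exact hlt i j h
  · exact (hc _ _).trans (hlt j i h)

section ScaleIndex

variable {q r r' : ℝ} {t : ℕ}

/-- The exponent of the least power of `q` that is at least `r`, i.e. `⌈log_q r⌉` for `1 ≤ r`. -/
noncomputable def scaleIndex (q r : ℝ) : ℕ := sInf {s : ℕ | r ≤ q ^ s}

theorem le_pow_scaleIndex (hq : 1 < q) (r : ℝ) : r ≤ q ^ scaleIndex q r :=
  Nat.sInf_mem (s := {s : ℕ | r ≤ q ^ s}) ((pow_unbounded_of_one_lt r hq).imp fun _ => le_of_lt)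

theorem pow_lt_of_lt_scaleIndex {s : ℕ} (hs : s < scaleIndex q r) : q ^ s < r :=
  not_le.mp (Nat.notMem_of_lt_sInf hs)

theorem scaleIndex_le (h : r ≤ q ^ t) : scaleIndex q r ≤ t := Nat.sInf_le h

theorem le_mul_of_scaleIndex_eq (hq : 1 < q) (hr' : 1 ≤ r')
    (h : scaleIndex q r = scaleIndex q r') : r ≤ q * r' := by
  have hr := le_pow_scaleIndex hq r
  rcases hs : scaleIndex q r' with _ | s
  · rw [h, hs, pow_zero] at hr
    nlinarith
  · calc r ≤ q ^ (s + 1) := by rwa [h, hs] at hr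
      _ = q * q ^ s := pow_succ' _ _
      _ ≤ q * r' := mul_le_mul_of_nonneg_left
          (pow_lt_of_lt_scaleIndex (hs ▸ s.lt_succ_self)).le (by linarith)

end ScaleIndex

theorem IsNKClique.exists_coloring {X : Type*} [MetricSpace X] {M : ℕ} {K q : ℝ}
    {x : Fin M → X} (hx : IsNKClique M K x) (hq : 1 < q) {t : ℕ} (ht : K ≤ q ^ t) :
    ∃ c : Fin M → Fin M → Fin (t + 1), (∀ i j, c i j = c j i) ∧
      ∀ i j k l, i ≠ j → k ≠ l → c i j = c k l → dist (x i) (x j) ≤ q * dist (x k) (x l) := by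
  rcases (Finset.univ.offDiag : Finset (Fin M × Fin M)).eq_empty_or_nonempty with hempty | hne
  · refine ⟨fun _ _ => 0, fun _ _ => rfl, fun i j _ _ hij => absurd hempty ?_⟩
    exact Finset.ne_empty_of_mem (a := (i, j)) (by simp [hij])
  obtain ⟨⟨k₀, l₀⟩, hkl₀, hmin⟩ := Finset.exists_min_image _ (fun p => dist (x p.1) (x p.2)) hne
  set a := dist (x k₀) (x l₀)
  have ha : 0 < a := dist_pos.mpr (hx.1.ne (by simpa using hkl₀))
  have hone : ∀ i j, i ≠ j → 1 ≤ dist (x i) (x j) / a := fun i j hij =>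
    (one_le_div ha).mpr (hmin (i, j) (by simp [hij]))
  have hidx : ∀ i j, i ≠ j → scaleIndex q (dist (x i) (x j) / a) ≤ t := fun i j hij =>
    scaleIndex_le <| ((div_le_iff₀ ha).mpr (hx.2 i j k₀ l₀ hij (by simpa using hkl₀))).trans ht
  refine ⟨fun i j => ⟨min (scaleIndex q (dist (x i) (x j) / a)) t, by omega⟩,
    fun i j => by simp only [dist_comm], fun i j k l hij hkl hc => ?_⟩
  have hc' := congrArg Fin.val hc
  simp only [min_eq_left (hidx i j hij), min_eq_left (hidx k l hkl)] at hc'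
  have := le_mul_of_scaleIndex_eq hq (hone k l hkl) hc'
  rwa [div_le_iff₀ ha, mul_assoc, div_mul_cancel₀ _ ha.ne'] at this

/-- If `X` is `K`-cliquey for some `K > 1`, then `X` is `K'`-cliquey for every `K' > 1`. -/
theorem cliquey_for_some_iff_for_all (X : Type*) [MetricSpace X]
    (h : ∃ K : ℝ, 1 < K ∧ IsCliquey X K) :
    ∀ K' : ℝ, 1 < K' → IsCliquey X K' := by
  obtain ⟨K, -, hX⟩ := h
  intro K' hK' N
  obtain ⟨t, ht⟩ := pow_unbounded_of_one_lt K hK'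
  obtain ⟨M, hramsey⟩ := exists_injective_monochromatic_of_symmetric (Fin (t + 1)) N
  obtain ⟨x, hx⟩ := hX M
  obtain ⟨c, hc_symm, hc⟩ := hx.exists_coloring hK' ht.le
  obtain ⟨f, hf, s, hs⟩ := hramsey c hc_symm
  exact ⟨x ∘ f, hx.1.comp hf, fun i j k l hij hkl =>
    hc _ _ _ _ (hf.ne hij) (hf.ne hkl) ((hs i j hij).trans (hs k l hkl).symm)⟩
end

section
/- Let X be a K-cliquey metric space for some K > 1 and let f : X → Y be a quasisymmetric embedding into a metric space Y. Then Y has infinite Assouad dimension; in particular, Y is not doubling. -/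
open Metric

def QuasiSym {X Y : Type*} [MetricSpace X] [MetricSpace Y]
    (f : X → Y) (Ψ : ℝ → ℝ) : Prop :=
  Function.Injective f ∧ ∀ x y z : X, x ≠ y → x ≠ z → y ≠ z →
    dist (f x) (f y) ≤ Ψ (dist x y / dist x z) * dist (f x) (f z)

/-- `X` has finite Assouad dimension. -/
def FiniteAssouad (X : Type*) [MetricSpace X] : Prop :=
  ∃ α C : ℝ, 0 ≤ α ∧ 0 < C ∧ ∀ (x : X) (r R : ℝ), 0 < r → r < R →
    ∃ s : Finset X, (s.card : ℝ) ≤ C * (R / r) ^ α ∧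
      ball x R ⊆ ⋃ y ∈ s, ball y r

/-- Counting lemma: `n` points pairwise `δ`-separated need at least `n` balls of
radius `r` with `2r ≤ δ` to cover them. -/
lemma count_sep {Y : Type*} [MetricSpace Y] {n : ℕ} (y : Fin n → Y) (δ r : ℝ)
    (hsep : ∀ i j : Fin n, i ≠ j → δ ≤ dist (y i) (y j)) (hr : 2 * r ≤ δ)
    (s : Finset Y) (hcov : ∀ i, ∃ c ∈ s, dist (y i) c < r) : n ≤ s.card := by
  have hg : ∀ i : Fin n, ∃ c : {c // c ∈ s}, dist (y i) c.1 < r := by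
    intro i; obtain ⟨c, hc, h⟩ := hcov i; exact ⟨⟨c, hc⟩, h⟩
  choose g hgd using hg
  have hginj : Function.Injective g := by
    intro i j hij
    by_contra hne
    have h1 := hgd i
    have h2 := hgd j
    have htri := dist_triangle (y i) (g i).1 (y j)
    have hc : dist ((g i).1) (y j) = dist (y j) ((g j).1) := by rw [hij, dist_comm]
    have hs := hsep i j hne
    linarith
  calc n = Fintype.card (Fin n) := (Fintype.card_fin n).symm
    _ ≤ Fintype.card {c // c ∈ s} := Fintype.card_le_of_injective g hginj
    _ = s.card := Fintype.card_coe s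

/-- The quasisymmetric image of a cliquey space is cliquey. -/
lemma imageClique {X Y : Type*} [MetricSpace X] [MetricSpace Y]
    (K : ℝ) (hK : 1 < K) (hX : IsCliquey X K)
    (f : X → Y) (Ψ : ℝ → ℝ)
    (hΨmono : StrictMonoOn Ψ (Set.Ioi (0 : ℝ)))
    (hΨpos : ∀ t : ℝ, 0 < t → 0 < Ψ t)
    (hf : QuasiSym f Ψ) :
    ∃ L : ℝ, 1 ≤ L ∧ ∀ N : ℕ, ∃ y : Fin N → Y, Function.Injective y ∧
      ∀ i j k l : Fin N, i ≠ j → k ≠ l →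
        dist (y i) (y j) ≤ L * dist (y k) (y l) := by
  have hK0 : (0:ℝ) < K := by linarith
  have hP0 : 0 < Ψ K := hΨpos K hK0
  set P := Ψ K with hPdef
  refine ⟨max (P^4) 1, le_max_right _ _, ?_⟩
  intro N
  obtain ⟨x, hxinj, hxq⟩ := hX (N + 6)
  set yy : Fin (N+6) → Y := fun p => f (x p) with hyy
  have key : ∀ p q s : Fin (N+6), p ≠ q → p ≠ s → q ≠ s →
      dist (yy p) (yy q) ≤ P * dist (yy p) (yy s) := by
    intro p q s hpq hps hqs
    have h1 : x p ≠ x q := fun h => hpq (hxinj h)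
    have h2 : x p ≠ x s := fun h => hps (hxinj h)
    have h3 : x q ≠ x s := fun h => hqs (hxinj h)
    have hd : 0 < dist (x p) (x s) := dist_pos.mpr h2
    have hd2 : 0 < dist (x p) (x q) := dist_pos.mpr h1
    have hratio : dist (x p) (x q) / dist (x p) (x s) ≤ K :=
      (div_le_iff₀ hd).mpr (hxq p q p s hpq hps)
    have hratio0 : 0 < dist (x p) (x q) / dist (x p) (x s) := div_pos hd2 hd
    have hmain := hf.2 (x p) (x q) (x s) h1 h2 h3
    have hle : Ψ (dist (x p) (x q) / dist (x p) (x s)) ≤ P :=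
      hΨmono.monotoneOn (Set.mem_Ioi.mpr hratio0) (Set.mem_Ioi.mpr hK0) hratio
    exact hmain.trans (mul_le_mul_of_nonneg_right hle dist_nonneg)
  have hle6 : N ≤ N + 6 := by omega
  refine ⟨fun p => yy (Fin.castLE hle6 p), ?_, ?_⟩
  · intro i j h
    exact Fin.castLE_injective hle6 (hxinj (hf.1 h))
  · intro i j k l hij hkl
    have hi := i.isLt
    have hj := j.isLt
    have hk' := k.isLt
    have hl' := l.isLt
    set a : Fin (N+6) := ⟨N, by omega⟩ with ha
    set b : Fin (N+6) := ⟨N+1, by omega⟩ with hb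
    have hia : Fin.castLE hle6 i ≠ a := Fin.ne_of_val_ne (by simp [ha]; omega)
    have hja : Fin.castLE hle6 j ≠ a := Fin.ne_of_val_ne (by simp [ha]; omega)
    have hka : Fin.castLE hle6 k ≠ a := Fin.ne_of_val_ne (by simp [ha]; omega)
    have hla : Fin.castLE hle6 l ≠ a := Fin.ne_of_val_ne (by simp [ha]; omega)
    have hib : Fin.castLE hle6 i ≠ b := Fin.ne_of_val_ne (by simp [hb]; omega)
    have hkb : Fin.castLE hle6 k ≠ b := Fin.ne_of_val_ne (by simp [hb]; omega)
    have hab : a ≠ b := Fin.ne_of_val_ne (by simp [ha, hb])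
    have hij' : Fin.castLE hle6 i ≠ Fin.castLE hle6 j :=
      fun h => hij (Fin.castLE_injective hle6 h)
    have hkl' : Fin.castLE hle6 k ≠ Fin.castLE hle6 l :=
      fun h => hkl (Fin.castLE_injective hle6 h)
    have c1 := key (Fin.castLE hle6 i) (Fin.castLE hle6 j) a hij' hia hja
    have c2 := key a (Fin.castLE hle6 i) b hia.symm hab hib
    have c3 := key a b (Fin.castLE hle6 k) hab hka.symm hkb.symm
    have c4 := key (Fin.castLE hle6 k) a (Fin.castLE hle6 l) hka hkl' hla.symm
    calc dist (yy (Fin.castLE hle6 i)) (yy (Fin.castLE hle6 j))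
        ≤ P * dist (yy (Fin.castLE hle6 i)) (yy a) := c1
      _ = P * dist (yy a) (yy (Fin.castLE hle6 i)) := by
          rw [dist_comm (yy (Fin.castLE hle6 i)) (yy a)]
      _ ≤ P * (P * dist (yy a) (yy b)) := mul_le_mul_of_nonneg_left c2 hP0.le
      _ ≤ P * (P * (P * dist (yy a) (yy (Fin.castLE hle6 k)))) :=
          mul_le_mul_of_nonneg_left (mul_le_mul_of_nonneg_left c3 hP0.le) hP0.le
      _ = P * (P * (P * dist (yy (Fin.castLE hle6 k)) (yy a))) := by
          rw [dist_comm (yy a) (yy (Fin.castLE hle6 k))]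
      _ ≤ P * (P * (P * (P * dist (yy (Fin.castLE hle6 k)) (yy (Fin.castLE hle6 l))))) :=
          mul_le_mul_of_nonneg_left (mul_le_mul_of_nonneg_left
            (mul_le_mul_of_nonneg_left c4 hP0.le) hP0.le) hP0.le
      _ = P^4 * dist (yy (Fin.castLE hle6 k)) (yy (Fin.castLE hle6 l)) := by ring
      _ ≤ max (P^4) 1 * dist (yy (Fin.castLE hle6 k)) (yy (Fin.castLE hle6 l)) :=
          mul_le_mul_of_nonneg_right (le_max_left _ _) dist_nonneg

/-- If `n+2` points form an `L`-clique and a family of small balls covers a suitable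
ball around the first point, then we need at least `n+2` balls. -/
lemma clique_count {Y : Type*} [MetricSpace Y] {L : ℝ} (hL : 1 ≤ L) {n : ℕ}
    (y : Fin (n+2) → Y) (hyinj : Function.Injective y)
    (hyq : ∀ i j k l : Fin (n+2), i ≠ j → k ≠ l →
      dist (y i) (y j) ≤ L * dist (y k) (y l))
    (s : Finset Y) (ρ : ℝ) (hρ : ρ ≤ dist (y 0) (y 1) / (2*L))
    (hsub : ball (y 0) ((L+1) * dist (y 0) (y 1)) ⊆ ⋃ c ∈ s, ball c ρ) :
    n + 2 ≤ s.card := by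
  have h01 : (0 : Fin (n+2)) ≠ 1 := by simp [Fin.ext_iff]
  have hm : 0 < dist (y 0) (y 1) := dist_pos.mpr (fun h => h01 (hyinj h))
  have hL0 : (0:ℝ) < L := by linarith
  have hsep : ∀ i j : Fin (n+2), i ≠ j →
      dist (y 0) (y 1) / L ≤ dist (y i) (y j) := by
    intro i j hij
    have h1 := hyq 0 1 i j h01 hij
    rw [div_le_iff₀ hL0]
    nlinarith [h1]
  have hcov : ∀ i : Fin (n+2), ∃ c ∈ s, dist (y i) c < ρ := by
    intro i
    have hmem : y i ∈ ball (y 0) ((L+1) * dist (y 0) (y 1)) := by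
      rw [mem_ball]
      by_cases hi : i = 0
      · subst hi
        rw [dist_self]
        exact mul_pos (by linarith) hm
      · have h1 := hyq i 0 0 1 hi h01
        nlinarith [h1, hm]
    have hmem2 := hsub hmem
    simp only [Set.mem_iUnion, mem_ball] at hmem2
    obtain ⟨c, hc, hcd⟩ := hmem2
    exact ⟨c, hc, hcd⟩
  have h2ρ : 2 * ρ ≤ dist (y 0) (y 1) / L := by
    have h1 : ρ * (2*L) ≤ dist (y 0) (y 1) := (le_div_iff₀ (by linarith)).mp hρ
    rw [le_div_iff₀ hL0]
    nlinarith [h1]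
  exact count_sep y (dist (y 0) (y 1) / L) ρ hsep h2ρ s hcov

/-- A quasisymmetric image of a `K`-cliquey space has infinite Assouad dimension;
in particular it is not doubling. -/
theorem qs_image_of_cliquey_infinite_assouad {X Y : Type*}
    [MetricSpace X] [MetricSpace Y]
    (K : ℝ) (hK : 1 < K) (hX : IsCliquey X K)
    (f : X → Y) (Ψ : ℝ → ℝ)
    (hΨmono : StrictMonoOn Ψ (Set.Ioi (0 : ℝ)))
    (hΨbij : Set.BijOn Ψ (Set.Ioi (0 : ℝ)) (Set.Ioi (0 : ℝ)))
    (hf : QuasiSym f Ψ) :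
    ¬ FiniteAssouad Y ∧ ¬ IsDoubling Y := by
  have hΨpos : ∀ t : ℝ, 0 < t → 0 < Ψ t := fun t ht =>
    hΨbij.mapsTo (Set.mem_Ioi.mpr ht)
  obtain ⟨L, hL1, hclq⟩ := imageClique K hK hX f Ψ hΨmono hΨpos hf
  have hL0 : (0:ℝ) < L := by linarith
  constructor
  · rintro ⟨α, C, hα, hC, h⟩
    obtain ⟨N, hN⟩ := exists_nat_gt (C * (2*L*(L+1)) ^ α)
    obtain ⟨y, hyinj, hyq⟩ := hclq (N + 2)
    have h01 : (0 : Fin (N+2)) ≠ 1 := by simp [Fin.ext_iff]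
    have hm : 0 < dist (y 0) (y 1) := dist_pos.mpr (fun hh => h01 (hyinj hh))
    have hr : 0 < dist (y 0) (y 1) / (2*L) := by positivity
    have hrR : dist (y 0) (y 1) / (2*L) < (L+1) * dist (y 0) (y 1) := by
      rw [div_lt_iff₀ (by linarith : (0:ℝ) < 2*L)]
      have h4 : (0:ℝ) < 2*L*(L+1) - 1 := by nlinarith
      nlinarith [mul_pos hm h4]
    obtain ⟨s, hcard, hsub⟩ := h (y 0) (dist (y 0) (y 1) / (2*L))
      ((L+1) * dist (y 0) (y 1)) hr hrR
    have hcount := clique_count hL1 y hyinj hyq s (dist (y 0) (y 1) / (2*L)) le_rfl hsub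
    have hRr : ((L+1) * dist (y 0) (y 1)) / (dist (y 0) (y 1) / (2*L)) = 2*L*(L+1) := by
      field_simp
    rw [hRr] at hcard
    have hfin : (N:ℝ) + 2 ≤ C * (2*L*(L+1)) ^ α := by
      calc (N:ℝ) + 2 ≤ (s.card : ℝ) := by exact_mod_cast hcount
        _ ≤ _ := hcard
    linarith
  · rintro ⟨M, hM⟩
    have iter : ∀ (k : ℕ) (x : Y) (R : ℝ), 0 < R →
        ∃ s : Finset Y, s.card ≤ M^k ∧ ball x R ⊆ ⋃ c ∈ s, ball c (R / 2^k) := by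
      classical
      intro k
      induction k with
      | zero =>
        intro x R hR
        refine ⟨{x}, by simp, ?_⟩
        intro z hz
        simp only [pow_zero, div_one, Finset.mem_singleton, Set.mem_iUnion]
        exact ⟨x, rfl, hz⟩
      | succ k ih =>
        intro x R hR
        obtain ⟨s, hcard, hsub⟩ := ih x R hR
        have hch : ∀ c : Y, ∃ t : Finset Y, t.card ≤ M ∧
            ball c (R/2^k) ⊆ ⋃ d ∈ t, ball d (R/2^k/2) := by
          intro c
          exact hM c (R/2^k) (by positivity)
        choose t ht1 ht2 using hch
        refine ⟨s.biUnion t, ?_, ?_⟩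
        · calc (s.biUnion t).card ≤ ∑ c ∈ s, (t c).card := Finset.card_biUnion_le
            _ ≤ ∑ _c ∈ s, M := Finset.sum_le_sum (fun c _ => ht1 c)
            _ = s.card * M := by rw [Finset.sum_const, smul_eq_mul]
            _ ≤ M^k * M := Nat.mul_le_mul_right _ hcard
            _ = M^(k+1) := (pow_succ M k).symm
        · intro z hz
          have hz1 := hsub hz
          simp only [Set.mem_iUnion] at hz1
          obtain ⟨c, hc, hzc⟩ := hz1
          have hz2 := ht2 c hzc
          simp only [Set.mem_iUnion] at hz2
          obtain ⟨d, hd, hzd⟩ := hz2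
          simp only [Set.mem_iUnion]
          refine ⟨d, Finset.mem_biUnion.mpr ⟨c, hc, hd⟩, ?_⟩
          have heq : R / 2^(k+1) = R / 2^k / 2 := by
            rw [pow_succ]; ring
          rw [heq]
          exact hzd
    obtain ⟨k, hk⟩ := pow_unbounded_of_one_lt (2*L*(L+1)) (one_lt_two (α := ℝ))
    obtain ⟨y, hyinj, hyq⟩ := hclq (M^k + 2)
    have h01 : (0 : Fin (M^k+2)) ≠ 1 := by simp [Fin.ext_iff]
    have hm : 0 < dist (y 0) (y 1) := dist_pos.mpr (fun hh => h01 (hyinj hh))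
    have hR : (0:ℝ) < (L+1) * dist (y 0) (y 1) := mul_pos (by linarith) hm
    obtain ⟨s, hcard, hsub⟩ := iter k (y 0) ((L+1) * dist (y 0) (y 1)) hR
    have h2k : (0:ℝ) < 2^k := by positivity
    have hρ : (L+1) * dist (y 0) (y 1) / 2^k ≤ dist (y 0) (y 1) / (2*L) := by
      rw [div_le_div_iff₀ h2k (by linarith : (0:ℝ) < 2*L)]
      nlinarith [hk, hm, hL1]
    have hcount := clique_count hL1 y hyinj hyq s
      ((L+1) * dist (y 0) (y 1) / 2^k) hρ hsub
    omega
end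

section
/- The quasisymmetric image of a doubling metric space under a quasisymmetric bijection is doubling, and the quasisymmetric image of a non-doubling metric space is non-doubling. -/
open Metric

/-- Iterated covering: a doubling space has covers of balls by `M^k` balls of radius `R/2^k`. -/
lemma qs_cover_iter {X : Type*} [MetricSpace X] {M : ℕ}
    (hM : ∀ (x : X) (R : ℝ), 0 < R → ∃ s : Finset X,
      s.card ≤ M ∧ ball x R ⊆ ⋃ y ∈ s, ball y (R / 2)) :
    ∀ (k : ℕ) (x : X) (R : ℝ), 0 < R → ∃ s : Finset X,
      s.card ≤ M ^ k ∧ ball x R ⊆ ⋃ y ∈ s, ball y (R / 2 ^ k) := by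
  classical
  intro k
  induction k with
  | zero =>
    intro x R hR
    exact ⟨{x}, by simp, by simp⟩
  | succ k ih =>
    intro x R hR
    obtain ⟨s, hs, hcov⟩ := ih x R hR
    have hpos : 0 < R / 2 ^ k := by positivity
    choose F hF1 hF2 using fun y : X => hM y (R / 2 ^ k) hpos
    refine ⟨s.biUnion F, ?_, ?_⟩
    · calc (s.biUnion F).card ≤ ∑ y ∈ s, (F y).card := Finset.card_biUnion_le
        _ ≤ ∑ _y ∈ s, M := Finset.sum_le_sum (fun y _ => hF1 y)
        _ = s.card * M := by rw [Finset.sum_const, smul_eq_mul]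
        _ ≤ M ^ k * M := Nat.mul_le_mul_right _ hs
        _ = M ^ (k + 1) := by ring
    · intro p hp
      have hp' := hcov hp
      simp only [Set.mem_iUnion] at hp' ⊢
      obtain ⟨y, hy, hpy⟩ := hp'
      have h2 := hF2 y hpy
      simp only [Set.mem_iUnion] at h2
      obtain ⟨z, hz, hpz⟩ := h2
      refine ⟨z, Finset.mem_biUnion.mpr ⟨y, hy, hz⟩, ?_⟩
      have heq : R / 2 ^ k / 2 = R / 2 ^ (k + 1) := by ring
      rwa [heq] at hpz

/-- In a doubling space, `ε R`-separated subsets of balls of radius `R` have bounded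
cardinality. -/
lemma qs_sep_of_doubling {X : Type*} [MetricSpace X] (hX : IsDoubling X) {ε : ℝ} (hε : 0 < ε) :
    ∃ N : ℕ, ∀ (x : X) (R : ℝ), 0 < R → ∀ s : Finset X,
      (∀ p ∈ s, p ∈ ball x R) → (∀ p ∈ s, ∀ q ∈ s, p ≠ q → ε * R ≤ dist p q) →
      s.card ≤ N := by
  classical
  obtain ⟨M, hM⟩ := hX
  obtain ⟨k, hk⟩ : ∃ k : ℕ, (1 / 2 : ℝ) ^ k < ε / 2 :=
    exists_pow_lt_of_lt_one (by positivity) (by norm_num)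
  refine ⟨M ^ k, ?_⟩
  intro x R hR s hmem hsep
  obtain ⟨c, hc, hcov⟩ := qs_cover_iter hM k x R hR
  have hchoose : ∀ p ∈ s, ∃ y ∈ c, p ∈ ball y (R / 2 ^ k) := by
    intro p hp
    have := hcov (hmem p hp)
    simpa using this
  choose! y hy1 hy2 using hchoose
  refine le_trans (Finset.card_le_card_of_injOn y (fun p hp => hy1 p hp) ?_) hc
  intro p hp q hq hpq
  by_contra hne
  have h1 := hy2 p hp
  have h2 := hy2 q hq
  rw [mem_ball] at h1 h2
  have hsep' := hsep p hp q hq hne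
  have htri : dist p q ≤ dist p (y p) + dist q (y p) := dist_triangle_right p q (y p)
  rw [hpq] at htri
  have hhalf : R / 2 ^ k = R * (1 / 2 : ℝ) ^ k := by
    rw [div_pow, one_pow]; ring
  rw [hhalf] at h1 h2
  rw [hpq] at h1
  nlinarith [hsep', htri, h1, h2, hk, hR, mul_lt_mul_of_pos_left hk hR]

/-- Conversely, a bound on `R/2`-separated subsets of balls of radius `R` gives doubling. -/
lemma qs_doubling_of_sep {Y : Type*} [MetricSpace Y] (N : ℕ)
    (h : ∀ (x : Y) (R : ℝ), 0 < R → ∀ s : Finset Y,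
      (∀ p ∈ s, p ∈ ball x R) → (∀ p ∈ s, ∀ q ∈ s, p ≠ q → 1 / 2 * R ≤ dist p q) →
      s.card ≤ N) :
    IsDoubling Y := by
  classical
  refine ⟨N, fun x R hR => ?_⟩
  set P : ℕ → Prop := fun n => ∃ s : Finset Y, s.card = n ∧ (∀ p ∈ s, p ∈ ball x R) ∧
    (∀ p ∈ s, ∀ q ∈ s, p ≠ q → 1 / 2 * R ≤ dist p q) with hPdef
  have hP0 : P 0 := ⟨∅, by simp⟩
  obtain ⟨s, hcard, hmem, hsep⟩ := Nat.findGreatest_spec (Nat.zero_le N) hP0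
  refine ⟨s, ?_, ?_⟩
  · rw [hcard]; exact Nat.findGreatest_le N
  · by_contra hcov
    rw [Set.subset_def] at hcov; push_neg at hcov
    obtain ⟨p, hp, hpout⟩ := hcov
    have hpd : ∀ q ∈ s, 1 / 2 * R ≤ dist p q := by
      intro q hq
      have hnot : p ∉ ball q (R / 2) := by
        intro hmem'
        exact hpout (by simp only [Set.mem_iUnion]; exact ⟨q, hq, hmem'⟩)
      rw [mem_ball] at hnot; push_neg at hnot
      linarith [hnot]
    have hpns : p ∉ s := by
      intro hps
      have := hpd p hps
      rw [dist_self] at this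
      linarith
    have hP1 : P (s.card + 1) := by
      refine ⟨insert p s, Finset.card_insert_of_notMem hpns, ?_, ?_⟩
      · intro q hq
        rcases Finset.mem_insert.mp hq with rfl | hq'
        · exact hp
        · exact hmem q hq'
      · intro a ha b hb hab
        rcases Finset.mem_insert.mp ha with rfl | ha' <;>
          rcases Finset.mem_insert.mp hb with rfl | hb'
        · exact absurd rfl hab
        · exact hpd b hb'
        · rw [dist_comm]; exact hpd a ha'
        · exact hsep a ha' b hb' hab
    have hle : s.card + 1 ≤ N := by
      obtain ⟨s', hc', hm', hs'⟩ := hP1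
      rw [← hc']
      exact h x R hR s' hm' hs'
    exact Nat.findGreatest_is_greatest (by omega) hle hP1

/-- Core transfer lemma: if `f` is a bijection that contracts by a factor `1/5` at relative
scale `t0`, then doubling transfers from the domain to the codomain. -/
lemma qs_core {X Y : Type*} [MetricSpace X] [MetricSpace Y] (f : X → Y)
    (hfinj : Function.Injective f) (hfsurj : Function.Surjective f)
    (t0 : ℝ) (ht0 : 0 < t0) (ht01 : t0 ≤ 1)
    (hcore : ∀ x y z : X, x ≠ y → x ≠ z → y ≠ z →
      dist x y ≤ t0 * dist x z → dist (f x) (f y) ≤ 1 / 5 * dist (f x) (f z))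
    (hX : IsDoubling X) : IsDoubling Y := by
  classical
  obtain ⟨N, hN⟩ := qs_sep_of_doubling hX (show (0 : ℝ) < t0 / 4 by positivity)
  apply qs_doubling_of_sep (max N 1)
  intro y0 R hR s hmem hsep
  haveI : Nonempty X := ⟨(hfsurj y0).choose⟩
  set g := Function.invFun f with hg
  have hfg : ∀ y, f (g y) = y := fun y => Function.invFun_eq (hfsurj y)
  have hginj : Function.Injective g := fun a b h => by rw [← hfg a, h, hfg]
  rcases le_or_gt s.card 1 with h1 | h1
  · exact h1.trans (le_max_right N 1)
  set t := s.image g with ht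
  have hcard : t.card = s.card := Finset.card_image_of_injective s hginj
  have htne : t.Nonempty := Finset.card_pos.mp (by omega)
  have hfmem : ∀ p ∈ t, f p ∈ s := by
    intro p hp
    obtain ⟨q, hq, rfl⟩ := Finset.mem_image.mp hp
    rw [hfg]; exact hq
  set x0 := g y0 with hx0
  set D : X → ℝ := fun p => dist x0 p with hD
  set R' := t.sup' htne D with hR'
  have hle' : ∀ p ∈ t, dist x0 p ≤ R' := fun p hp => Finset.le_sup' D hp
  obtain ⟨p1, hp1, p2, hp2, hp12⟩ := Finset.one_lt_card.mp (show 1 < t.card by omega)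
  have hR'pos : 0 < R' := by
    have h12 : 0 < dist p1 p2 := dist_pos.mpr hp12
    have htri := dist_triangle p1 x0 p2
    have hcm : dist p1 x0 = dist x0 p1 := dist_comm p1 x0
    linarith [hle' p1 hp1, hle' p2 hp2]
  obtain ⟨xs, hxs, hxseq⟩ := Finset.exists_mem_eq_sup' htne D
  have hballY : ∀ r ∈ t, dist (f r) y0 < R := by
    intro r hr
    have := hmem (f r) (hfmem r hr)
    rwa [mem_ball] at this
  have hsepX : ∀ p ∈ t, ∀ q ∈ t, p ≠ q → t0 / 4 * (2 * R') ≤ dist p q := by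
    intro p hp q hq hpq
    by_contra hlt
    push_neg at hlt
    have hcases : R' ≤ dist x0 p + dist p xs := by
      calc R' = D xs := hxseq
        _ = dist x0 xs := rfl
        _ ≤ dist x0 p + dist p xs := dist_triangle x0 p xs
    obtain ⟨c, hcd, hcY⟩ : ∃ c : X, R' / 2 ≤ dist p c ∧ dist (f c) y0 < R := by
      rcases le_or_gt (R' / 2) (dist p x0) with hcase | hcase
      · refine ⟨x0, hcase, ?_⟩
        have hfx0 : f x0 = y0 := hfg y0
        rw [hfx0, dist_self]; exact hR
      · refine ⟨xs, ?_, hballY xs hxs⟩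
        have hcm : dist x0 p = dist p x0 := dist_comm x0 p
        linarith
    have hpc_pos : 0 < dist p c := lt_of_lt_of_le (by positivity) hcd
    have hpc : p ≠ c := dist_pos.mp hpc_pos
    rcases eq_or_ne q c with rfl | hqc
    · nlinarith [hcd, hlt, hR'pos, ht01, ht0]
    · have happ := hcore p q c hpq hpc hqc
        (by nlinarith [hlt, mul_le_mul_of_nonneg_left hcd ht0.le])
      have hfpq : 1 / 2 * R ≤ dist (f p) (f q) :=
        hsep (f p) (hfmem p hp) (f q) (hfmem q hq) (fun h => hpq (hfinj h))
      have h2R : dist (f p) (f c) < 2 * R := by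
        calc dist (f p) (f c) ≤ dist (f p) y0 + dist (f c) y0 := dist_triangle_right _ _ _
          _ < R + R := add_lt_add (hballY p hp) hcY
          _ = 2 * R := by ring
      linarith [happ, hfpq, h2R, hR]
  have hcardle : t.card ≤ N := by
    refine hN x0 (2 * R') (by positivity) t ?_ hsepX
    intro p hp
    rw [mem_ball]
    have hcm : dist p x0 = dist x0 p := dist_comm p x0
    linarith [hle' p hp]
  rw [← hcard] at *
  omega

/-- Under a quasisymmetric bijection, the image of a doubling space is doubling and
the image of a non-doubling space is non-doubling. -/
theorem qs_bijection_preserves_doubling {X Y : Type*} [MetricSpace X] [MetricSpace Y]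
    (f : X → Y) (hbij : Function.Bijective f) (Ψ : ℝ → ℝ)
    (hΨmono : StrictMonoOn Ψ (Set.Ioi (0 : ℝ)))
    (hΨbij : Set.BijOn Ψ (Set.Ioi (0 : ℝ)) (Set.Ioi (0 : ℝ)))
    (hf : QuasiSym f Ψ) :
    (IsDoubling X → IsDoubling Y) ∧ (¬ IsDoubling X → ¬ IsDoubling Y) := by
  have hmain : IsDoubling X → IsDoubling Y := by
    intro hX
    obtain ⟨t1, ht1mem, ht1eq⟩ := hΨbij.surjOn (show (1 / 5 : ℝ) ∈ Set.Ioi 0 by norm_num)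
    have ht1pos : 0 < t1 := ht1mem
    refine qs_core f hbij.injective hbij.surjective (min t1 1) (lt_min ht1pos one_pos)
      (min_le_right _ _) ?_ hX
    intro x y z hxy hxz hyz hle
    have hdxz : 0 < dist x z := dist_pos.mpr hxz
    have hdxy : 0 < dist x y := dist_pos.mpr hxy
    have hratio : dist x y / dist x z ≤ t1 := by
      rw [div_le_iff₀ hdxz]
      calc dist x y ≤ min t1 1 * dist x z := hle
        _ ≤ t1 * dist x z := mul_le_mul_of_nonneg_right (min_le_left _ _) hdxz.le
    have hratio0 : (0 : ℝ) < dist x y / dist x z := by positivity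
    have hΨle : Ψ (dist x y / dist x z) ≤ 1 / 5 := by
      rw [← ht1eq]
      exact hΨmono.monotoneOn (Set.mem_Ioi.mpr hratio0) ht1mem hratio
    calc dist (f x) (f y) ≤ Ψ (dist x y / dist x z) * dist (f x) (f z) :=
          hf.2 x y z hxy hxz hyz
      _ ≤ 1 / 5 * dist (f x) (f z) := mul_le_mul_of_nonneg_right hΨle dist_nonneg
  refine ⟨hmain, ?_⟩
  intro hnX hY
  apply hnX
  rcases isEmpty_or_nonempty X with hE | hNE
  · exact ⟨0, fun x => (IsEmpty.false x).elim⟩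
  set g := Function.invFun f with hg
  have hfg : ∀ y, f (g y) = y := fun y => Function.invFun_eq (hbij.surjective y)
  have hgf : ∀ x, g (f x) = x := fun x => hbij.injective (by rw [hfg])
  have hginj : Function.Injective g := fun a b h => by rw [← hfg a, h, hfg]
  have hgsurj : Function.Surjective g := fun x => ⟨f x, hgf x⟩
  have hΨ5pos : 0 < Ψ 5 := hΨbij.mapsTo (show (5 : ℝ) ∈ Set.Ioi 0 by norm_num)
  refine qs_core g hginj hgsurj (min (1 / (2 * Ψ 5)) 1)
    (lt_min (by positivity) one_pos) (min_le_right _ _) ?_ hY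
  intro a b c hab hac hbc hle
  by_contra hgoal
  push_neg at hgoal
  have hxy : g a ≠ g b := fun h => hab (hginj (by rw [h]))
  have hxz : g a ≠ g c := fun h => hac (hginj (by rw [h]))
  have hyz : g b ≠ g c := fun h => hbc (hginj (by rw [h]))
  have hdxy : 0 < dist (g a) (g b) := dist_pos.mpr hxy
  have hdxz : 0 < dist (g a) (g c) := dist_pos.mpr hxz
  have hq := hf.2 (g a) (g c) (g b) hxz hxy (Ne.symm hyz)
  rw [hfg, hfg, hfg] at hq
  have hratio0 : (0 : ℝ) < dist (g a) (g c) / dist (g a) (g b) := by positivity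
  have hratio5 : dist (g a) (g c) / dist (g a) (g b) ≤ 5 := by
    rw [div_le_iff₀ hdxy]
    linarith [hgoal]
  have hΨle : Ψ (dist (g a) (g c) / dist (g a) (g b)) ≤ Ψ 5 :=
    hΨmono.monotoneOn (Set.mem_Ioi.mpr hratio0) (Set.mem_Ioi.mpr (by norm_num)) hratio5
  have hdac : 0 < dist a c := dist_pos.mpr hac
  have h2 : dist a b ≤ 1 / (2 * Ψ 5) * dist a c :=
    hle.trans (mul_le_mul_of_nonneg_right (min_le_left _ _) dist_nonneg)
  have hchain : dist a c ≤ Ψ 5 * dist a b :=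
    hq.trans (mul_le_mul_of_nonneg_right hΨle dist_nonneg)
  have hfinal : Ψ 5 * (1 / (2 * Ψ 5) * dist a c) = dist a c / 2 := by
    field_simp
  nlinarith [hchain, h2, hΨ5pos, hdac, mul_le_mul_of_nonneg_left h2 hΨ5pos.le]
end
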